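/- arXiv:2605.19867 — 3 statements merged into one kernel-verified Lean document; each statement's English description precedes it below -/
import Mathlib

section
/- Let A be a real symmetric positive definite n×n matrix and Z a real n×m matrix with injective associated linear map, so that E = Zᵀ A Z is invertible, and let Q = Z E⁻¹ Zᵀ. Then for every b ∈ ℝⁿ, the vector Q b is the unique vector u lying in the column space of Z (the range of Z.mulVecLin) satisfying Zᵀ (b − A ⬝ᵥ u) = 0. -/
/-! Since `Z` is injective, `E = Zᵀ A Z` is positive definite, hence invertible. For `u = Z c`
the Galerkin condition reads `E c = Zᵀ b`, so `c = E⁻¹ Zᵀ b` and `u = Q b`. -/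

open Matrix

namespace Matrix

variable {n m R : Type*} [Fintype n] [Fintype m] [DecidableEq m] [CommRing R]

noncomputable def coarseCorrection (A : Matrix n n R) (Z : Matrix n m R) : Matrix n n R :=
  Z * (Zᵀ * A * Z)⁻¹ * Zᵀ

variable {A : Matrix n n R} {Z : Matrix n m R}

lemma coarseCorrection_mulVec_mem_range (b : n → R) :
    coarseCorrection A Z *ᵥ b ∈ LinearMap.range Z.mulVecLin :=
  ⟨((Zᵀ * A * Z)⁻¹ * Zᵀ) *ᵥ b, by
    simp only [coarseCorrection, mulVecLin_apply, mulVec_mulVec, Matrix.mul_assoc]⟩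

lemma transpose_mulVec_mulVec_coarseCorrection (hE : IsUnit (Zᵀ * A * Z).det) (b : n → R) :
    Zᵀ *ᵥ (A *ᵥ (coarseCorrection A Z *ᵥ b)) = Zᵀ *ᵥ b := by
  calc Zᵀ *ᵥ (A *ᵥ (coarseCorrection A Z *ᵥ b))
      = ((Zᵀ * A * Z) * (Zᵀ * A * Z)⁻¹ * Zᵀ) *ᵥ b := by
        simp only [coarseCorrection, mulVec_mulVec, Matrix.mul_assoc]
    _ = Zᵀ *ᵥ b := by rw [mul_nonsing_inv _ hE, Matrix.one_mul]

lemma mulVec_eq_coarseCorrection_mulVec (hE : IsUnit (Zᵀ * A * Z).det) {b : n → R}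
    {c : m → R} (hc : Zᵀ *ᵥ (b - A *ᵥ (Z *ᵥ c)) = 0) :
    Z *ᵥ c = coarseCorrection A Z *ᵥ b := by
  have hEc : (Zᵀ * A * Z) *ᵥ c = Zᵀ *ᵥ b := by
    rw [mulVec_sub, sub_eq_zero, mulVec_mulVec, mulVec_mulVec] at hc
    exact hc.symm
  have hc' : c = (Zᵀ * A * Z)⁻¹ *ᵥ (Zᵀ *ᵥ b) := by
    rw [← hEc, mulVec_mulVec, nonsing_inv_mul _ hE, one_mulVec]
  rw [hc', coarseCorrection, mulVec_mulVec, mulVec_mulVec, Matrix.mul_assoc]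

end Matrix

/-- Let `A` be real symmetric positive definite and `Z` have injective associated linear
map, so that `E = Zᵀ * A * Z` is invertible, and let `Q = Z * E⁻¹ * Zᵀ`. Then for every
`b`, the vector `Q *ᵥ b` is the unique vector `u` in the column space of `Z`
(the range of `Z.mulVecLin`) satisfying `Zᵀ *ᵥ (b - A *ᵥ u) = 0`. -/
theorem coarse_correction_unique_galerkin (n m : ℕ)
    (A : Matrix (Fin n) (Fin n) ℝ) (hA : A.PosDef)
    (Z : Matrix (Fin n) (Fin m) ℝ) (hZ : Function.Injective Z.mulVecLin) :
    ∀ b : Fin n → ℝ,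
      (Z * (Zᵀ * A * Z)⁻¹ * Zᵀ) *ᵥ b ∈ LinearMap.range Z.mulVecLin ∧
      Zᵀ *ᵥ (b - A *ᵥ ((Z * (Zᵀ * A * Z)⁻¹ * Zᵀ) *ᵥ b)) = 0 ∧
      ∀ u : Fin n → ℝ, u ∈ LinearMap.range Z.mulVecLin →
        Zᵀ *ᵥ (b - A *ᵥ u) = 0 → u = (Z * (Zᵀ * A * Z)⁻¹ * Zᵀ) *ᵥ b := by
  have hE : IsUnit (Zᵀ * A * Z).det := by
    have hpos : (Zᵀ * A * Z).PosDef := by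
      simpa only [conjTranspose_eq_transpose_of_trivial] using hA.conjTranspose_mul_mul_same hZ
    exact (isUnit_iff_isUnit_det _).mp hpos.isUnit
  intro b
  refine ⟨coarseCorrection_mulVec_mem_range b, ?_, ?_⟩
  · rw [mulVec_sub, sub_eq_zero]
    exact (transpose_mulVec_mulVec_coarseCorrection hE b).symm
  · rintro _ ⟨c, rfl⟩ hc
    exact mulVec_eq_coarseCorrection_mulVec hE hc
end

section
/- Let A be a real symmetric positive definite n×n matrix and Z a real n×m matrix with injective associated linear map, so that E = Zᵀ A Z is invertible, and let Q = Z E⁻¹ Zᵀ. Then for every b ∈ ℝⁿ, Q b minimises the A-norm distance to A⁻¹ b over the column space of Z: for every u in the column space of Z, (A⁻¹ ⬝ᵥ b − Q ⬝ᵥ b) ⬝ᵥ (A ⬝ᵥ (A⁻¹ ⬝ᵥ b − Q ⬝ᵥ b)) ≤ (A⁻¹ ⬝ᵥ b − u) ⬝ᵥ (A ⬝ᵥ (A⁻¹ ⬝ᵥ b − u)). In other words, Q b is the A-orthogonal projection of A⁻¹ b onto the coarse space. -/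
/-!
The error `e = A⁻¹ b - Q b` satisfies the Galerkin orthogonality `Zᵀ A e = 0`, since
`Zᵀ A (A⁻¹ - Z E⁻¹ Zᵀ) = Zᵀ - E E⁻¹ Zᵀ = 0`. Hence for `u = Z c` we may write
`A⁻¹ b - u = e + Z d`, where the cross terms vanish, and Pythagoras in the `A`-inner product
gives `‖A⁻¹ b - u‖²_A = ‖e‖²_A + ‖Z d‖²_A ≥ ‖e‖²_A`.
-/

open Matrix

namespace Matrix

variable {ι κ R : Type*} [Fintype ι] [Fintype κ]

theorem transpose_mul_mul_inv_sub_eq_zero [DecidableEq ι] [DecidableEq κ] [CommRing R] {A : Matrix ι ι R} (hA : IsUnit A)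
    {Z : Matrix ι κ R} (hE : IsUnit (Zᵀ * A * Z)) :
    Zᵀ * A * (A⁻¹ - Z * (Zᵀ * A * Z)⁻¹ * Zᵀ) = 0 := by
  have hAA : A * A⁻¹ = 1 := mul_nonsing_inv A ((isUnit_iff_isUnit_det A).mp hA)
  have hEE : Zᵀ * A * Z * (Zᵀ * A * Z)⁻¹ = 1 :=
    mul_nonsing_inv _ ((isUnit_iff_isUnit_det _).mp hE)
  calc Zᵀ * A * (A⁻¹ - Z * (Zᵀ * A * Z)⁻¹ * Zᵀ)
      = Zᵀ * (A * A⁻¹) - Zᵀ * A * Z * (Zᵀ * A * Z)⁻¹ * Zᵀ := by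
        simp only [Matrix.mul_sub, Matrix.mul_assoc]
    _ = 0 := by rw [hAA, hEE, Matrix.mul_one, Matrix.one_mul, sub_self]

theorem PosSemidef.dotProduct_mulVec_le_of_transpose_mulVec_eq_zero {A : Matrix ι ι ℝ}
    (hA : A.PosSemidef) {Z : Matrix ι κ ℝ} {e : ι → ℝ} (he : Zᵀ *ᵥ (A *ᵥ e) = 0)
    (d : κ → ℝ) : e ⬝ᵥ (A *ᵥ e) ≤ (e + Z *ᵥ d) ⬝ᵥ (A *ᵥ (e + Z *ᵥ d)) := by
  have hAt : Aᵀ = A := hA.isHermitian.eq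
  have horth : (Z *ᵥ d) ⬝ᵥ (A *ᵥ e) = 0 := by
    rw [← vecMul_transpose, ← dotProduct_mulVec, he, dotProduct_zero]
  have horth' : e ⬝ᵥ (A *ᵥ (Z *ᵥ d)) = 0 := by
    rw [dotProduct_mulVec, ← hAt, vecMul_transpose, dotProduct_comm, horth]
  have hnonneg : 0 ≤ (Z *ᵥ d) ⬝ᵥ (A *ᵥ (Z *ᵥ d)) := by
    simpa only [star_trivial] using hA.dotProduct_mulVec_nonneg (Z *ᵥ d)
  calc e ⬝ᵥ (A *ᵥ e)
      ≤ e ⬝ᵥ (A *ᵥ e) + e ⬝ᵥ (A *ᵥ (Z *ᵥ d)) + (Z *ᵥ d) ⬝ᵥ (A *ᵥ e)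
          + (Z *ᵥ d) ⬝ᵥ (A *ᵥ (Z *ᵥ d)) := by linarith
    _ = (e + Z *ᵥ d) ⬝ᵥ (A *ᵥ (e + Z *ᵥ d)) := by
        simp only [mulVec_add, add_dotProduct, dotProduct_add]
        ring

end Matrix

/-- Let `A` be real symmetric positive definite and `Z` have injective associated linear
map, so that `E = Zᵀ * A * Z` is invertible, and let `Q = Z * E⁻¹ * Zᵀ`. Then for every
`b`, `Q *ᵥ b` minimises the `A`-norm distance to `A⁻¹ *ᵥ b` over the column space of `Z`:
`Q *ᵥ b` is the `A`-orthogonal projection of `A⁻¹ *ᵥ b` onto the coarse space. -/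
theorem coarse_correction_A_orthogonal_projection (n m : ℕ)
    (A : Matrix (Fin n) (Fin n) ℝ) (hA : A.PosDef)
    (Z : Matrix (Fin n) (Fin m) ℝ) (hZ : Function.Injective Z.mulVecLin) :
    ∀ b : Fin n → ℝ, ∀ u ∈ LinearMap.range Z.mulVecLin,
      (A⁻¹ *ᵥ b - (Z * (Zᵀ * A * Z)⁻¹ * Zᵀ) *ᵥ b) ⬝ᵥ
          (A *ᵥ (A⁻¹ *ᵥ b - (Z * (Zᵀ * A * Z)⁻¹ * Zᵀ) *ᵥ b)) ≤
        (A⁻¹ *ᵥ b - u) ⬝ᵥ (A *ᵥ (A⁻¹ *ᵥ b - u)) := by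
  rintro b _ ⟨c, rfl⟩
  have hE : (Zᵀ * A * Z).PosDef := by
    simpa only [conjTranspose_eq_transpose_of_trivial] using hA.conjTranspose_mul_mul_same hZ
  have horth : Zᵀ *ᵥ (A *ᵥ (A⁻¹ *ᵥ b - (Z * (Zᵀ * A * Z)⁻¹ * Zᵀ) *ᵥ b)) = 0 := by
    rw [← sub_mulVec, mulVec_mulVec, mulVec_mulVec,
      transpose_mul_mul_inv_sub_eq_zero hA.isUnit hE.isUnit, zero_mulVec]
  have hsplit : A⁻¹ *ᵥ b - Z.mulVecLin c = (A⁻¹ *ᵥ b - (Z * (Zᵀ * A * Z)⁻¹ * Zᵀ) *ᵥ b)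
      + Z *ᵥ ((Zᵀ * A * Z)⁻¹ *ᵥ (Zᵀ *ᵥ b) - c) := by
    rw [mulVecLin_apply, mulVec_sub, mulVec_mulVec, mulVec_mulVec, Matrix.mul_assoc]
    abel
  rw [hsplit]
  exact hA.posSemidef.dotProduct_mulVec_le_of_transpose_mulVec_eq_zero horth _
end

section
/- Let A be a real n×n matrix, Z a real n×m matrix with E = Zᵀ A Z invertible, Q = Z E⁻¹ Zᵀ, and M a real n×n matrix. For v ∈ ℝⁿ define the three-step fixed-point iteration from w₀ = 0 applying in turn the coarse correction, the smoother, and the coarse correction to the unpreconditioned residual: w₁ = Q ⬝ᵥ v, w₂ = w₁ + M ⬝ᵥ (v − A ⬝ᵥ w₁), w₃ = w₂ + Q ⬝ᵥ (v − A ⬝ᵥ w₂). Then w₃ = (Q + (1 − Q * A) * M * (1 − A * Q)) ⬝ᵥ v; that is, the three-step iteration realises the balancing-Neumann-Neumann preconditioner P_BNN. -/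
open Matrix

private lemma bnn_aux (n : ℕ) (A Q M : Matrix (Fin n) (Fin n) ℝ)
    (hQAQ : Q * A * Q = Q) (v : Fin n → ℝ) :
    Q *ᵥ v + M *ᵥ (v - A *ᵥ (Q *ᵥ v)) +
      Q *ᵥ (v - A *ᵥ (Q *ᵥ v + M *ᵥ (v - A *ᵥ (Q *ᵥ v)))) =
    (Q + (1 - Q * A) * M * (1 - A * Q)) *ᵥ v := by
  have key : Q + (1 - Q * A) * M * (1 - A * Q) =
      Q + (M - M * A * Q) + (Q - Q * A * Q - (Q * A * M - Q * A * M * A * Q)) := by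
    rw [hQAQ]; noncomm_ring
  rw [key]
  simp only [Matrix.mulVec_sub, Matrix.mulVec_add, Matrix.sub_mulVec,
    Matrix.add_mulVec, Matrix.mulVec_mulVec, Matrix.one_mulVec, ← Matrix.mul_assoc]
  rw [hQAQ]
  abel

private lemma bnn_QAQ (n m : ℕ) (A : Matrix (Fin n) (Fin n) ℝ)
    (Z : Matrix (Fin n) (Fin m) ℝ) (hE : IsUnit (Zᵀ * A * Z)) :
    (Z * (Zᵀ * A * Z)⁻¹ * Zᵀ) * A * (Z * (Zᵀ * A * Z)⁻¹ * Zᵀ) =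
      Z * (Zᵀ * A * Z)⁻¹ * Zᵀ := by
  have h := Matrix.nonsing_inv_mul (Zᵀ * A * Z) ((Matrix.isUnit_iff_isUnit_det _).mp hE)
  simp only [Matrix.mul_assoc]
  rw [← Matrix.mul_assoc A Z, ← Matrix.mul_assoc Zᵀ (A * Z),
    ← Matrix.mul_assoc Zᵀ A Z, ← Matrix.mul_assoc (Zᵀ * A * Z)⁻¹, h, Matrix.one_mul]

/-- Let `E = Zᵀ * A * Z` be invertible, `Q = Z * E⁻¹ * Zᵀ`, and `M` any real `n × n`
matrix. The three-step fixed-point iteration from `w₀ = 0` applying in turn the coarse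
correction, the smoother, and the coarse correction to the unpreconditioned residual
realises the balancing-Neumann-Neumann preconditioner
`P_BNN = Q + (1 - Q * A) * M * (1 - A * Q)`. -/
theorem bnn_fixed_point_form (n m : ℕ)
    (A : Matrix (Fin n) (Fin n) ℝ)
    (Z : Matrix (Fin n) (Fin m) ℝ)
    (hE : IsUnit (Zᵀ * A * Z))
    (M : Matrix (Fin n) (Fin n) ℝ) (v : Fin n → ℝ) :
    letI Q : Matrix (Fin n) (Fin n) ℝ := Z * (Zᵀ * A * Z)⁻¹ * Zᵀ
    letI w₁ : Fin n → ℝ := Q *ᵥ v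
    letI w₂ : Fin n → ℝ := w₁ + M *ᵥ (v - A *ᵥ w₁)
    letI w₃ : Fin n → ℝ := w₂ + Q *ᵥ (v - A *ᵥ w₂)
    w₃ = (Q + (1 - Q * A) * M * (1 - A * Q)) *ᵥ v :=
  bnn_aux n A (Z * (Zᵀ * A * Z)⁻¹ * Zᵀ) M (bnn_QAQ n m A Z hE) v
end
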